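/- arXiv:2407.09212 — 6 statements merged into one kernel-verified Lean document; each statement's English description precedes it below -/
import Mathlib

section
/- For all real numbers α₁ ≤ β₁ and α₂ ≤ β₂, there exist real pairs (a₁,b₁) and (a₂,b₂) such that C(α₁,β₁) ∩ C(α₂,β₂) = C(a₁,b₁) ∪ C(a₂,b₂). (That is, the intersection of two cones is a union of at most two cones, so multicone regions — finite unions of cones — are closed under intersection.) -/
/-- The cone `C(α,β) = { exp(t·I) : α ≤ t ≤ β } ⊆ ℂ`. -/
noncomputable def cone (α β : ℝ) : Set ℂ :=
  {z : ℂ | ∃ t : ℝ, α ≤ t ∧ t ≤ β ∧ z = Complex.exp (t * Complex.I)}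

/-- The rotation `Rot(θ,γ,δ)` acting on parameter pairs `(α,β) ∈ ℝ × ℝ`. -/
noncomputable def rot (θ γ δ : ℝ) (p : ℝ × ℝ) : ℝ × ℝ :=
  if p.1 > p.2 ∨ p.2 - p.1 ≥ 2 * Real.pi then p
  else (((p.1 + p.2) / 2) + θ - (γ * (p.2 - p.1) + δ) / 2,
        ((p.1 + p.2) / 2) + θ + (γ * (p.2 - p.1) + δ) / 2)

/-- The image cone of `(α,β)` under `Rot(θ,γ,δ)`. -/
noncomputable def imageCone (θ γ δ : ℝ) (p : ℝ × ℝ) : Set ℂ :=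
  cone (rot θ γ δ p).1 (rot θ γ δ p).2

lemma exp_shift (t : ℝ) (k : ℤ) :
    Complex.exp ((↑(t + k * (2 * Real.pi)) : ℂ) * Complex.I) =
      Complex.exp ((t : ℂ) * Complex.I) := by
  push_cast
  rw [add_mul, Complex.exp_add]
  have : ((k : ℂ) * (2 * Real.pi)) * Complex.I = k * (2 * Real.pi * Complex.I) := by ring
  rw [this, Complex.exp_int_mul_two_pi_mul_I, mul_one]

lemma cone_full (α β t : ℝ) (h : 2 * Real.pi ≤ β - α) :
    Complex.exp ((t : ℂ) * Complex.I) ∈ cone α β := by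
  have hπ : (0:ℝ) < 2 * Real.pi := by positivity
  set k : ℤ := ⌈(α - t) / (2 * Real.pi)⌉ with hk
  refine ⟨t + k * (2 * Real.pi), ?_, ?_, (exp_shift t k).symm⟩
  · have := Int.le_ceil ((α - t) / (2 * Real.pi))
    rw [div_le_iff₀ hπ] at this
    linarith
  · have := Int.ceil_lt_add_one ((α - t) / (2 * Real.pi))
    rw [← hk] at this
    have : (k : ℝ) ≤ (α - t) / (2 * Real.pi) + 1 := le_of_lt this
    have h2 : (k : ℝ) * (2 * Real.pi) ≤ α - t + 2 * Real.pi := by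
      calc (k : ℝ) * (2 * Real.pi) ≤ ((α - t) / (2 * Real.pi) + 1) * (2 * Real.pi) := by
            exact mul_le_mul_of_nonneg_right this hπ.le
        _ = α - t + 2 * Real.pi := by field_simp
    linarith

theorem cone_inter_eq_union_two_cones (α₁ β₁ α₂ β₂ : ℝ)
    (h₁ : α₁ ≤ β₁) (h₂ : α₂ ≤ β₂) :
    ∃ a₁ b₁ a₂ b₂ : ℝ, cone α₁ β₁ ∩ cone α₂ β₂ = cone a₁ b₁ ∪ cone a₂ b₂ := by
  have hπ : (0:ℝ) < 2 * Real.pi := by positivity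
  by_cases hc1 : 2 * Real.pi ≤ β₁ - α₁
  · refine ⟨α₂, β₂, α₂, β₂, ?_⟩
    rw [Set.union_self]
    apply Set.inter_eq_right.mpr
    rintro z ⟨t, ht1, ht2, rfl⟩
    exact cone_full _ _ _ hc1
  by_cases hc2 : 2 * Real.pi ≤ β₂ - α₂
  · refine ⟨α₁, β₁, α₁, β₁, ?_⟩
    rw [Set.union_self]
    apply Set.inter_eq_left.mpr
    rintro z ⟨t, ht1, ht2, rfl⟩
    exact cone_full _ _ _ hc2
  push_neg at hc1 hc2
  set T := 2 * Real.pi with hT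
  set k₀ : ℤ := ⌈(α₂ - β₁) / T⌉ with hk₀
  refine ⟨max α₁ (α₂ - k₀ * T), min β₁ (β₂ - k₀ * T),
          max α₁ (α₂ - (k₀ + 1) * T), min β₁ (β₂ - (k₀ + 1) * T), ?_⟩
  ext z
  constructor
  · rintro ⟨⟨t, ht1, ht2, rfl⟩, ⟨s, hs1, hs2, hz⟩⟩
    obtain ⟨n, hn⟩ := Complex.exp_eq_exp_iff_exists_int.mp hz
    have hts : t = s + n * (2 * Real.pi) := by
      have h' : (t : ℂ) * Complex.I = ((s + n * (2 * Real.pi) : ℝ) : ℂ) * Complex.I := by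
        push_cast; rw [hn]; ring
      have := mul_right_cancel₀ Complex.I_ne_zero h'
      exact_mod_cast this
    have hb1 : α₂ + (n : ℝ) * T ≤ t := by rw [hts, hT]; linarith
    have hb2 : t ≤ β₂ + (n : ℝ) * T := by rw [hts, hT]; linarith
    have hk0le : k₀ ≤ -n := by
      rw [hk₀]
      apply Int.ceil_le.mpr
      rw [div_le_iff₀ hπ]
      push_cast
      linarith
    have hle : -n ≤ k₀ + 1 := by
      have h3 : ((α₂ - β₁) / T : ℝ) ≤ (k₀ : ℝ) := by rw [hk₀]; exact Int.le_ceil _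
      have h3' : α₂ - β₁ ≤ (k₀ : ℝ) * T := by
        rw [div_le_iff₀ hπ] at h3; linarith
      have h6 : ((-n : ℤ) : ℝ) * T < ((k₀ : ℝ) + 2) * T := by
        push_cast; nlinarith
      have h5 : ((-n : ℤ) : ℝ) < ((k₀ + 2 : ℤ) : ℝ) := by
        have := lt_of_mul_lt_mul_right h6 hπ.le
        push_cast; push_cast at this; linarith
      have h7 : (-n : ℤ) < k₀ + 2 := by exact_mod_cast h5
      omega
    have hcase : -n = k₀ ∨ -n = k₀ + 1 := by omega
    rcases hcase with h | h
    · left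
      have hknr : (k₀ : ℝ) = -(n : ℝ) := by exact_mod_cast congrArg (Int.cast : ℤ → ℝ) h.symm
      exact ⟨t, max_le ht1 (by rw [hknr]; linarith), le_min ht2 (by rw [hknr]; linarith), rfl⟩
    · right
      have hknr : ((k₀ : ℝ) + 1) = -(n : ℝ) := by
        have : ((k₀ + 1 : ℤ) : ℝ) = ((-n : ℤ) : ℝ) := by exact_mod_cast congrArg (Int.cast : ℤ → ℝ) h.symm
        push_cast at this; linarith
      exact ⟨t, max_le ht1 (by rw [add_mul, one_mul]; nlinarith [hknr]),
        le_min ht2 (by rw [add_mul, one_mul]; nlinarith [hknr]), rfl⟩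
  · rintro (⟨t, ht1, ht2, rfl⟩ | ⟨t, ht1, ht2, rfl⟩)
    · refine ⟨⟨t, le_trans (le_max_left _ _) ht1, le_trans ht2 (min_le_left _ _), rfl⟩,
        ⟨t + k₀ * T, ?_, ?_, (exp_shift t k₀).symm⟩⟩
      · have := le_trans (le_max_right _ _) ht1; linarith
      · have := le_trans ht2 (min_le_right _ _); linarith
    · refine ⟨⟨t, le_trans (le_max_left _ _) ht1, le_trans ht2 (min_le_left _ _), rfl⟩,
        ⟨t + (k₀ + 1) * T, ?_, ?_, ?_⟩⟩
      · have := le_trans (le_max_right _ _) ht1; push_cast; push_cast at ht1 ⊢; linarith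
      · have := le_trans ht2 (min_le_right _ _); push_cast at this ⊢; linarith
      · have h := (exp_shift t (k₀ + 1)).symm
        have he : t + ((k₀ + 1 : ℤ) : ℝ) * (2 * Real.pi) = t + ((k₀ : ℝ) + 1) * T := by
          rw [hT]; push_cast; ring
        rw [he] at h
        exact h
end

section
/- Let θ₁, θ₂ be real numbers and let γ₁, γ₂ be real numbers with 0 ≤ γ₁ ≤ 1 and 0 ≤ γ₂ ≤ 1. Then the aperture-multiplicative rotations Rot(θ₁,γ₁,0) and Rot(θ₂,γ₂,0) commute: for every parameter pair (α,β) ∈ ℝ × ℝ, Rot(θ₁,γ₁,0)(Rot(θ₂,γ₂,0)(α,β)) = Rot(θ₂,γ₂,0)(Rot(θ₁,γ₁,0)(α,β)). -/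
theorem apertureMultiplicative_rotations_commute (θ₁ θ₂ γ₁ γ₂ : ℝ)
    (hγ₁ : 0 ≤ γ₁) (hγ₁' : γ₁ ≤ 1) (hγ₂ : 0 ≤ γ₂) (hγ₂' : γ₂ ≤ 1) :
    ∀ p : ℝ × ℝ, rot θ₁ γ₁ 0 (rot θ₂ γ₂ 0 p) = rot θ₂ γ₂ 0 (rot θ₁ γ₁ 0 p) := by

  intro p
  obtain ⟨α, β⟩ := p
  by_cases h : α > β ∨ β - α ≥ 2 * Real.pi
  · have h1 : rot θ₂ γ₂ 0 (α, β) = (α, β) := by simp [rot, h]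
    have h2 : rot θ₁ γ₁ 0 (α, β) = (α, β) := by simp [rot, h]
    rw [h1, h2, h1]

  · push_neg at h
    obtain ⟨hab, hw⟩ := h
    have hab' : α ≤ β := hab
    have hwpos : 0 ≤ β - α := by linarith
    have key : ∀ γ θ, 0 ≤ γ → γ ≤ 1 →
        rot θ γ 0 (α, β) = ((α + β) / 2 + θ - γ * (β - α) / 2,
                            (α + β) / 2 + θ + γ * (β - α) / 2) := by
      intro γ θ hg hg'
      simp only [rot]
      rw [if_neg]
      · norm_num
      · push_neg
        refine ⟨?_, ?_⟩ <;> nlinarith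
    have hcond : ∀ γ θ, 0 ≤ γ → γ ≤ 1 → ¬ ((rot θ γ 0 (α, β)).1 > (rot θ γ 0 (α, β)).2 ∨
        (rot θ γ 0 (α, β)).2 - (rot θ γ 0 (α, β)).1 ≥ 2 * Real.pi) := by
      intro γ θ hg hg'
      rw [key γ θ hg hg']
      push_neg
      refine ⟨?_, ?_⟩ <;> simp only <;> nlinarith
    rw [key γ₂ θ₂ hγ₂ hγ₂', key γ₁ θ₁ hγ₁ hγ₁']
    simp only [rot, if_neg (by
      have := hcond γ₂ θ₂ hγ₂ hγ₂'
      rw [key γ₂ θ₂ hγ₂ hγ₂'] at this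
      exact this), if_neg (by
      have := hcond γ₁ θ₁ hγ₁ hγ₁'
      rw [key γ₁ θ₁ hγ₁ hγ₁'] at this
      exact this)]
    rw [Prod.mk.injEq]
    constructor <;> ring
end

section
/- Let u, v, w be positive real numbers with u + v ≤ w, and let θ₁, θ₂ be arbitrary real numbers. Then the aperture-additive rotations Rot(θ₁,1,−u) and Rot(θ₂,1,−v) commute on the pair (0, w): Rot(θ₂,1,−v)(Rot(θ₁,1,−u)(0, w)) = Rot(θ₁,1,−u)(Rot(θ₂,1,−v)(0, w)). -/
theorem apertureAdditive_rotations_commute_neg (u v w θ₁ θ₂ : ℝ)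
    (hu : 0 < u) (hv : 0 < v) (hw : 0 < w) (huvw : u + v ≤ w) :
    rot θ₂ 1 (-v) (rot θ₁ 1 (-u) (0, w)) = rot θ₁ 1 (-u) (rot θ₂ 1 (-v) (0, w)) := by
  by_cases h : w ≥ 2 * Real.pi
  · have h2 : (0:ℝ) > w ∨ w - 0 ≥ 2 * Real.pi := Or.inr (by linarith)
    simp only [rot, if_pos h2]
  · push_neg at h
    have h1 : ¬ ((0:ℝ) > w ∨ w - 0 ≥ 2 * Real.pi) := by
      push_neg; exact ⟨hw.le, by simpa using h⟩
    simp only [rot, if_neg h1]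
    have e1 : ¬ (w/2 + θ₁ - (1*(w-0) + -u)/2 > w/2 + θ₁ + (1*(w-0) + -u)/2 ∨
        (w/2 + θ₁ + (1*(w-0) + -u)/2) - (w/2 + θ₁ - (1*(w-0) + -u)/2) ≥ 2 * Real.pi) := by
      push_neg
      constructor <;> nlinarith
    have e2 : ¬ (w/2 + θ₂ - (1*(w-0) + -v)/2 > w/2 + θ₂ + (1*(w-0) + -v)/2 ∨
        (w/2 + θ₂ + (1*(w-0) + -v)/2) - (w/2 + θ₂ - (1*(w-0) + -v)/2) ≥ 2 * Real.pi) := by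
      push_neg
      constructor <;> nlinarith
    simp only [show (0:ℝ)+w = w from by ring] at *
    rw [if_neg e1, if_neg e2]
    ext <;> simp <;> ring
end

section
/- (Composition pattern for aperture-additive rotations) Let θ₁, θ₂, θ₃ be real numbers and δ₁ ≥ 0, δ₂ ≥ 0, δ₃ ≥ 0 with |θ₃ − (θ₁ + θ₂)| ≤ (δ₃ − (δ₁ + δ₂))/2. Then for every parameter pair (α,β) ∈ ℝ × ℝ, the image cone of the composed pair Rot(θ₂,1,δ₂)(Rot(θ₁,1,δ₁)(α,β)) (first apply Rot(θ₁,1,δ₁), then Rot(θ₂,1,δ₂)) is a subset of the image cone of (α,β) under Rot(θ₃,1,δ₃). -/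
lemma cone_mono {α β α' β' : ℝ} (h1 : α' ≤ α) (h2 : β ≤ β') :
    cone α β ⊆ cone α' β' := by
  rintro z ⟨t, ht1, ht2, rfl⟩
  exact ⟨t, le_trans h1 ht1, le_trans ht2 h2, rfl⟩

lemma mem_cone_of_full {α β : ℝ} (h : 2 * Real.pi ≤ β - α) (t : ℝ) :
    Complex.exp (t * Complex.I) ∈ cone α β := by
  have hπ : (0:ℝ) < 2 * Real.pi := by positivity
  set k : ℤ := ⌈(α - t) / (2 * Real.pi)⌉ with hk
  refine ⟨t + 2 * Real.pi * k, ?_, ?_, ?_⟩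
  · have h1 := Int.le_ceil ((α - t) / (2 * Real.pi))
    rw [div_le_iff₀ hπ] at h1
    nlinarith
  · have h2 : ((k:ℝ)) < (α - t) / (2 * Real.pi) + 1 := Int.ceil_lt_add_one _
    have h3 : (α - t) / (2 * Real.pi) * (2 * Real.pi) = α - t := by field_simp
    nlinarith
  · push_cast
    rw [add_mul, Complex.exp_add]
    have he : Complex.exp ((2 * (Real.pi:ℂ) * k) * Complex.I) = 1 := by
      rw [show (2 * (Real.pi:ℂ) * k) * Complex.I = k * (2 * Real.pi * Complex.I) by ring]
      exact Complex.exp_int_mul_two_pi_mul_I k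
    rw [he, mul_one]

theorem composition_pattern_apertureAdditive (θ₁ θ₂ θ₃ δ₁ δ₂ δ₃ : ℝ)
    (hδ₁ : 0 ≤ δ₁) (hδ₂ : 0 ≤ δ₂) (hδ₃ : 0 ≤ δ₃)
    (h : |θ₃ - (θ₁ + θ₂)| ≤ (δ₃ - (δ₁ + δ₂)) / 2) :
    ∀ p : ℝ × ℝ,
      cone (rot θ₂ 1 δ₂ (rot θ₁ 1 δ₁ p)).1 (rot θ₂ 1 δ₂ (rot θ₁ 1 δ₁ p)).2 ⊆
        imageCone θ₃ 1 δ₃ p := by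
  have habs := abs_le.mp h
  rintro ⟨α, β⟩
  by_cases hc : α > β ∨ β - α ≥ 2 * Real.pi
  · have e1 : rot θ₁ 1 δ₁ (α, β) = (α, β) := by simp only [rot]; rw [if_pos hc]
    have e3 : rot θ₃ 1 δ₃ (α, β) = (α, β) := by simp only [rot]; rw [if_pos hc]
    rw [e1]
    have e2 : rot θ₂ 1 δ₂ (α, β) = (α, β) := by simp only [rot]; rw [if_pos hc]
    rw [e2, imageCone, e3]
  · push_neg at hc
    obtain ⟨hab, hlt⟩ := hc
    have hne : ¬(α > β ∨ β - α ≥ 2 * Real.pi) := by push_neg; exact ⟨hab, hlt⟩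
    set a := (α + β) / 2 with ha
    have e1 : rot θ₁ 1 δ₁ (α, β) =
        (a + θ₁ - (1 * (β - α) + δ₁) / 2, a + θ₁ + (1 * (β - α) + δ₁) / 2) := by
      simp only [rot]; rw [if_neg hne]
    have e3 : rot θ₃ 1 δ₃ (α, β) =
        (a + θ₃ - (1 * (β - α) + δ₃) / 2, a + θ₃ + (1 * (β - α) + δ₃) / 2) := by
      simp only [rot]; rw [if_neg hne]
    set q := 1 * (β - α) + δ₁ with hq
    have hq0 : 0 ≤ q := by simp only [hq, one_mul]; linarith
    rw [e1, imageCone, e3]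
    have hδ13 : δ₁ + δ₂ ≤ δ₃ := by
      have := abs_nonneg (θ₃ - (θ₁ + θ₂)); linarith
    by_cases h2 : (a + θ₁ + q / 2) - (a + θ₁ - q / 2) ≥ 2 * Real.pi
    · have e2 : rot θ₂ 1 δ₂ (a + θ₁ - q / 2, a + θ₁ + q / 2) =
          (a + θ₁ - q / 2, a + θ₁ + q / 2) := by
        simp only [rot]; rw [if_pos (Or.inr h2)]
      rw [e2]
      rintro z ⟨t, _, _, rfl⟩
      have hw : 2 * Real.pi ≤ q := by linarith
      have hfull : 2 * Real.pi ≤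
          (a + θ₃ + (1 * (β - α) + δ₃) / 2) - (a + θ₃ - (1 * (β - α) + δ₃) / 2) := by
        simp only [hq, one_mul] at hw ⊢; linarith
      exact mem_cone_of_full hfull t
    · have e2 : rot θ₂ 1 δ₂ (a + θ₁ - q / 2, a + θ₁ + q / 2) =
          (((a + θ₁ - q / 2) + (a + θ₁ + q / 2)) / 2 + θ₂
              - (1 * ((a + θ₁ + q / 2) - (a + θ₁ - q / 2)) + δ₂) / 2,
           ((a + θ₁ - q / 2) + (a + θ₁ + q / 2)) / 2 + θ₂
              + (1 * ((a + θ₁ + q / 2) - (a + θ₁ - q / 2)) + δ₂) / 2) := by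
        simp only [rot]
        rw [if_neg (by push_neg; exact ⟨by linarith, by push_neg at h2; exact h2⟩)]
      rw [e2]
      apply cone_mono
      · simp only [hq, one_mul]; nlinarith [habs.1, habs.2]
      · simp only [hq, one_mul]; nlinarith [habs.1, habs.2]
end

section
/- (Composition pattern for aperture-multiplicative rotations) Let θ₁, θ₂ be real numbers, let γ₁ ≥ 0, 0 ≤ γ₂ ≤ 1, γ₃, δ₃ be reals, and let δ₁ ≥ 0, δ₂ ≥ 0 satisfy γ₁·γ₂ ≤ γ₃ and δ₁ + δ₂ ≤ δ₃. Then for every parameter pair (α,β) with α ≤ β, β − α < 2π, and γ₁·(β − α) + δ₁ < 2π, the image cone of the composed pair Rot(θ₂,γ₂,δ₂)(Rot(θ₁,γ₁,δ₁)(α,β)) (first apply Rot(θ₁,γ₁,δ₁), then Rot(θ₂,γ₂,δ₂)) is a subset of the image cone of (α,β) under Rot(θ₁+θ₂, γ₃, δ₃). -/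
theorem composition_pattern_apertureMultiplicative (θ₁ θ₂ γ₁ γ₂ γ₃ δ₁ δ₂ δ₃ : ℝ)
    (hγ₁ : 0 ≤ γ₁) (hγ₂ : 0 ≤ γ₂) (hγ₂' : γ₂ ≤ 1)
    (hδ₁ : 0 ≤ δ₁) (hδ₂ : 0 ≤ δ₂)
    (hγ : γ₁ * γ₂ ≤ γ₃) (hδ : δ₁ + δ₂ ≤ δ₃) :
    ∀ α β : ℝ, α ≤ β → β - α < 2 * Real.pi → γ₁ * (β - α) + δ₁ < 2 * Real.pi →
      cone (rot θ₂ γ₂ δ₂ (rot θ₁ γ₁ δ₁ (α, β))).1 (rot θ₂ γ₂ δ₂ (rot θ₁ γ₁ δ₁ (α, β))).2 ⊆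
        imageCone (θ₁ + θ₂) γ₃ δ₃ (α, β) := by
  intro α β hab hlt hq₁
  have hw : 0 ≤ β - α := by linarith
  have hq₁0 : 0 ≤ γ₁ * (β - α) + δ₁ := by positivity
  have h1 : ¬ ((α, β).1 > (α, β).2 ∨ (α, β).2 - (α, β).1 ≥ 2 * Real.pi) := by
    push_neg; constructor <;> simp <;> linarith
  have e1 : rot θ₁ γ₁ δ₁ (α, β) =
      (((α + β) / 2) + θ₁ - (γ₁ * (β - α) + δ₁) / 2,
       ((α + β) / 2) + θ₁ + (γ₁ * (β - α) + δ₁) / 2) := by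
    rw [rot, if_neg h1]
  set q₁ := γ₁ * (β - α) + δ₁ with hq₁def
  have h2 : ¬ ((rot θ₁ γ₁ δ₁ (α, β)).1 > (rot θ₁ γ₁ δ₁ (α, β)).2 ∨
      (rot θ₁ γ₁ δ₁ (α, β)).2 - (rot θ₁ γ₁ δ₁ (α, β)).1 ≥ 2 * Real.pi) := by
    rw [e1]; push_neg; constructor <;> simp <;> linarith
  have e2 : rot θ₂ γ₂ δ₂ (rot θ₁ γ₁ δ₁ (α, β)) =
      (((α + β) / 2) + θ₁ + θ₂ - (γ₂ * q₁ + δ₂) / 2,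
       ((α + β) / 2) + θ₁ + θ₂ + (γ₂ * q₁ + δ₂) / 2) := by
    rw [rot, if_neg h2, e1, Prod.mk.injEq]
    constructor <;> · simp only []; ring
  have e3 : rot (θ₁ + θ₂) γ₃ δ₃ (α, β) =
      (((α + β) / 2) + (θ₁ + θ₂) - (γ₃ * (β - α) + δ₃) / 2,
       ((α + β) / 2) + (θ₁ + θ₂) + (γ₃ * (β - α) + δ₃) / 2) := by
    rw [rot, if_neg h1]
  have hle : γ₂ * q₁ + δ₂ ≤ γ₃ * (β - α) + δ₃ := by
    rw [hq₁def]
    nlinarith [mul_nonneg hγ₁ hw, mul_le_of_le_one_left hδ₁ hγ₂',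
      mul_le_mul_of_nonneg_right hγ hw]
  clear_value q₁
  intro z hz
  rw [e2] at hz
  obtain ⟨t, ht1, ht2, ht3⟩ := hz
  simp only [] at ht1 ht2
  refine ⟨t, ?_, ?_, ht3⟩ <;> rw [e3] <;> simp only [] <;> linarith
end

section
/- (Asymmetry pattern) Let θ and δ be real numbers with δ ≥ 0, and suppose that for every integer k, |2θ − 2·k·π| > δ (that is, two applications of the rotation angle never come within the aperture of completing a full circle). Then the relation R(θ,δ) is asymmetric: for all real a and b, if R(θ,δ)(a,b) holds then R(θ,δ)(b,a) does not hold. -/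
/-- The relation `R(θ,δ)` on `ℝ`: `R(θ,δ)(a,b)` iff `∃ k : ℤ, |b − a − θ − 2kπ| ≤ δ/2`. -/
def Rrel (θ δ : ℝ) (a b : ℝ) : Prop :=
  ∃ k : ℤ, |b - a - θ - 2 * (k : ℝ) * Real.pi| ≤ δ / 2

theorem asymmetry_pattern (θ δ : ℝ) (hδ : 0 ≤ δ)
    (h : ∀ k : ℤ, |2 * θ - 2 * (k : ℝ) * Real.pi| > δ) :
    ∀ a b : ℝ, Rrel θ δ a b → ¬ Rrel θ δ b a := by
  rintro a b ⟨k, hk⟩ ⟨m, hm⟩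
  have := h (-(k + m))
  have hsum : |(b - a - θ - 2 * (k : ℝ) * Real.pi) + (a - b - θ - 2 * (m : ℝ) * Real.pi)| ≤ δ := by
    calc _ ≤ _ := abs_add_le _ _
    _ ≤ δ / 2 + δ / 2 := add_le_add hk hm
    _ = δ := by ring
  have : |2 * θ - 2 * ((-(k + m) : ℤ) : ℝ) * Real.pi| ≤ δ := by
    rw [show (2 * θ - 2 * ((-(k + m) : ℤ) : ℝ) * Real.pi) = -((b - a - θ - 2 * (k : ℝ) * Real.pi) + (a - b - θ - 2 * (m : ℝ) * Real.pi)) by push_cast ; ring, abs_neg]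
    exact hsum
  linarith [h (-(k + m))]
end
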